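/- arXiv:2508.05788 — 4 statements merged into one kernel-verified Lean document; each statement's English description precedes it below -/
import Mathlib

section
/- For α > 0 and λ ∈ ℝ, the derivative of t ↦ E_α(λ·t^α) at any t > 0 equals t^(α-1)·λ·E_{α,α}(λ·t^α). -/
noncomputable def mittagLeffler (α z : ℝ) : ℝ := ∑' n : ℕ, z ^ n / Real.Gamma (α * n + 1)

noncomputable def mittagLeffler2 (α β z : ℝ) : ℝ := ∑' n : ℕ, z ^ n / Real.Gamma (α * n + β)

/-!
`Γ` eventually dominates every exponential `L ^ s` (it is squeezed from below by factorials), so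
`∑ x ^ n / Γ (α n + β)` converges for every `x` and the Mittag-Leffler series may be differentiated
termwise on all of `ℝ`. Since `Γ (α (n + 1) + 1) = α (n + 1) Γ (α n + α)`, the derived series of
`E_α` is `α⁻¹ E_{α,α}`; the chain rule with `d/dt (λ t ^ α) = α λ t ^ (α - 1)` cancels the `α⁻¹`.
-/

open Filter Real

namespace Real

theorem factorial_le_Gamma {n : ℕ} (hn : 1 ≤ n) {s : ℝ} (hs : n + 1 ≤ s) :
    (n.factorial : ℝ) ≤ Gamma s := by
  have hn' : (1 : ℝ) ≤ n := by exact_mod_cast hn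
  rw [← Gamma_nat_eq_factorial]
  exact Gamma_strictMonoOn_Ici.monotoneOn (by simp only [Set.mem_Ici]; linarith)
    (by simp only [Set.mem_Ici]; linarith) hs

theorem eventually_rpow_le_Gamma (L : ℝ) : ∀ᶠ s in atTop, L ^ s ≤ Gamma s := by
  set c := max |L| 1
  have hc : 1 ≤ c := le_max_right _ _
  obtain ⟨N, hN⟩ := eventually_atTop.mp <|
    (FloorSemiring.tendsto_pow_div_factorial_atTop (c ^ 2)).eventually_le_const one_pos
  filter_upwards [eventually_ge_atTop ((N : ℝ) + 4)] with s hs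
  have hs0 : 0 ≤ s := by linarith [N.cast_nonneg (α := ℝ)]
  set n := ⌊s - 1⌋₊
  have hns : (n : ℝ) + 1 ≤ s := by linarith [Nat.floor_le (by linarith : 0 ≤ s - 1)]
  have hsn : s < n + 2 := by linarith [Nat.lt_floor_add_one (s - 1)]
  have hNn : N ≤ n := by exact_mod_cast (by linarith : (N : ℝ) ≤ n)
  have hn : 1 ≤ n := by exact_mod_cast (by linarith : (1 : ℝ) ≤ n)
  calc L ^ s ≤ |L| ^ s := (le_abs_self _).trans (abs_rpow_le_abs_rpow L s)
    _ ≤ c ^ s := rpow_le_rpow (abs_nonneg L) (le_max_left _ _) hs0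
    _ ≤ c ^ (2 * n : ℝ) := rpow_le_rpow_of_exponent_le hc (by linarith)
    _ = (c ^ 2) ^ n := by rw [rpow_mul (by positivity)]; norm_cast
    _ ≤ n.factorial := (div_le_one (by exact_mod_cast n.factorial_pos)).mp (hN n hNn)
    _ ≤ Gamma s := factorial_le_Gamma hn hns

end Real

theorem summable_pow_div_Gamma_mul_add {α : ℝ} (hα : 0 < α) (β x : ℝ) :
    Summable fun n : ℕ => x ^ n / Gamma (α * n + β) := by
  set c := 2 * |x| + 1
  have hc : 0 < c := by positivity
  set L := c ^ α⁻¹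
  have hL : 0 < L := by positivity
  have hLpow : ∀ n : ℕ, L ^ (α * n + β) = c ^ n * L ^ β := fun n => by
    rw [rpow_add hL, rpow_mul hL.le, ← rpow_mul hc.le, inv_mul_cancel₀ hα.ne', rpow_one,
      rpow_natCast]
  have hratio : |x| / c < 1 := (div_lt_one hc).mpr (by linarith [abs_nonneg x])
  have hlin : Tendsto (fun n : ℕ => α * n + β) atTop atTop :=
    tendsto_atTop_add_const_right _ β (tendsto_natCast_atTop_atTop.const_mul_atTop hα)
  refine ((summable_geometric_of_lt_one (by positivity) hratio).mul_left (L ^ β)⁻¹)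
    |>.of_norm_bounded_eventually_nat ?_
  filter_upwards [hlin.eventually (eventually_rpow_le_Gamma L)] with n hn
  have hΓ : 0 < Gamma (α * n + β) := (by positivity : 0 < L ^ (α * n + β)).trans_le hn
  rw [norm_div, norm_pow, norm_of_nonneg hΓ.le, div_pow, Real.norm_eq_abs]
  calc |x| ^ n / Gamma (α * n + β) ≤ |x| ^ n / (c ^ n * L ^ β) := by
        rw [← hLpow]; gcongr
    _ = (L ^ β)⁻¹ * (|x| ^ n / c ^ n) := by field_simp

theorem hasDerivAt_tsum_mul_pow {𝕜 : Type*} [RCLike 𝕜] {a : ℕ → 𝕜}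
    (ha : ∀ r : ℝ, Summable fun n : ℕ => (n + 1) * ‖a (n + 1)‖ * r ^ n) (z : 𝕜) :
    HasDerivAt (fun y => ∑' n, a n * y ^ n) (∑' n : ℕ, (n + 1) * a (n + 1) * z ^ n) z := by
  set R := ‖z‖ + 1
  have hz : z ∈ Metric.ball (0 : 𝕜) R := by simp [R]
  have hbound : ∀ n : ℕ, ∀ y ∈ Metric.ball (0 : 𝕜) R,
      ‖n * a n * y ^ (n - 1)‖ ≤ n * ‖a n‖ * R ^ (n - 1) := fun n y hy => by
    rw [mem_ball_zero_iff] at hy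
    rw [norm_mul, norm_mul, norm_pow, RCLike.norm_natCast]
    gcongr
  have hu : Summable fun n : ℕ => n * ‖a n‖ * R ^ (n - 1) := by
    rw [← summable_nat_add_iff 1]
    simpa using ha R
  have h0 : Summable fun n : ℕ => a n * (0 : 𝕜) ^ n :=
    summable_of_ne_finset_zero (s := {0}) fun n hn => by simp_all
  have hderiv := hasDerivAt_tsum_of_isPreconnected (g' := fun n y => n * a n * y ^ (n - 1)) hu
    Metric.isOpen_ball Metric.isPreconnected_ball
    (fun n y _ => ((hasDerivAt_pow n y).const_mul (a n)).congr_deriv (by ring)) hbound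
    (Metric.mem_ball_self (by positivity)) h0 hz
  have hsum : Summable fun n : ℕ => n * a n * z ^ (n - 1) :=
    .of_norm_bounded hu fun n => hbound n z hz
  refine hderiv.congr_deriv ?_
  rw [hsum.tsum_eq_zero_add]
  simp

theorem succ_mul_inv_Gamma_mul_succ_add_one {α : ℝ} (hα : 0 < α) (n : ℕ) :
    (n + 1) * (Gamma (α * ↑(n + 1) + 1))⁻¹ = α⁻¹ * (Gamma (α * n + α))⁻¹ := by
  have hpos : 0 < α * n + α := by positivity
  rw [show α * ↑(n + 1) + 1 = (α * n + α) + 1 by push_cast; ring, Gamma_add_one hpos.ne']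
  field_simp

theorem hasDerivAt_mittagLeffler {α : ℝ} (hα : 0 < α) (z : ℝ) :
    HasDerivAt (mittagLeffler α) (α⁻¹ * mittagLeffler2 α α z) z := by
  have hderived (r : ℝ) :
      Summable fun n : ℕ => (n + 1) * ‖(Gamma (α * ↑(n + 1) + 1))⁻¹‖ * r ^ n := by
    refine ((summable_pow_div_Gamma_mul_add hα α r).mul_left α⁻¹).congr fun n => ?_
    rw [norm_inv, norm_of_nonneg (Gamma_pos_of_pos (by positivity)).le,
      succ_mul_inv_Gamma_mul_succ_add_one hα]
    ring
  have hderiv := hasDerivAt_tsum_mul_pow (a := fun n => (Gamma (α * n + 1))⁻¹) hderived z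
  have hseries : mittagLeffler α = fun y => ∑' n : ℕ, (Gamma (α * n + 1))⁻¹ * y ^ n := by
    ext y
    simp only [mittagLeffler, div_eq_inv_mul]
  rw [hseries, mittagLeffler2, ← tsum_mul_left]
  refine hderiv.congr_deriv (tsum_congr fun n => ?_)
  rw [succ_mul_inv_Gamma_mul_succ_add_one hα]
  ring

theorem ml_deriv (α : ℝ) (hα : 0 < α) (lam : ℝ) (t : ℝ) (ht : 0 < t) :
    HasDerivAt (fun u : ℝ => mittagLeffler α (lam * u ^ α))
      (t ^ (α - 1) * lam * mittagLeffler2 α α (lam * t ^ α)) t := by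
  refine ((hasDerivAt_mittagLeffler hα _).comp t
    ((hasDerivAt_rpow_const (Or.inl ht.ne')).const_mul lam)).congr_deriv ?_
  field_simp
end

section
/- Let α ∈ (0,1) and λ ∈ ℝ, and define f : [0,∞) → ℝ by f(t) = E_α(λ·t^α). Then f(t+s) = f(t)·f(s) for all t, s ≥ 0 if and only if λ = 0. -/
open Real

lemma gamma_lb (M : ℕ) (hM : 1 ≤ M) (x : ℝ) (hx : 1 ≤ x) :
    (M : ℝ) ^ (x - 1) / Real.exp M ≤ Real.Gamma (x + 1) := by
  set k := ⌊x⌋₊ with hk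
  have hk1 : 1 ≤ k := (Nat.one_le_floor_iff x).mpr hx
  have hk1' : (1:ℝ) ≤ (k:ℝ) := by exact_mod_cast hk1
  have hkx : (k : ℝ) ≤ x := Nat.floor_le (by linarith)
  have hxk : x - 1 ≤ (k : ℝ) := (Nat.sub_one_lt_floor x).le
  have h1 : Real.Gamma ((k : ℝ) + 1) ≤ Real.Gamma (x + 1) :=
    Real.Gamma_strictMonoOn_Ici.monotoneOn (by simp [Set.mem_Ici]; linarith)
      (by simp [Set.mem_Ici]; linarith) (by linarith)
  have h2 : Real.Gamma ((k : ℝ) + 1) = (Nat.factorial k : ℝ) := by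
    exact_mod_cast Real.Gamma_nat_eq_factorial k
  have hM1 : (1 : ℝ) ≤ (M : ℝ) := by exact_mod_cast hM
  have hfac : (0:ℝ) < (Nat.factorial k : ℝ) := by positivity
  have h3 : (M : ℝ) ^ k / Real.exp M ≤ (Nat.factorial k : ℝ) := by
    have := Real.pow_div_factorial_le_exp (x := (M:ℝ)) (by positivity) k
    rw [div_le_iff₀ hfac] at this
    rw [div_le_iff₀ (Real.exp_pos _)]
    linarith
  have h4 : (M : ℝ) ^ (x - 1) ≤ (M : ℝ) ^ (k:ℕ) := by
    rw [← Real.rpow_natCast (M:ℝ) k]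
    exact Real.rpow_le_rpow_of_exponent_le hM1 hxk
  calc (M : ℝ) ^ (x - 1) / Real.exp M ≤ (M : ℝ) ^ (k:ℕ) / Real.exp M :=
        by gcongr
      _ ≤ (Nat.factorial k : ℝ) := h3
      _ = Real.Gamma ((k:ℝ) + 1) := h2.symm
      _ ≤ _ := h1

lemma ml_summable (α : ℝ) (hα : 0 < α) (z : ℝ) :
    Summable (fun n : ℕ => z ^ n / Real.Gamma (α * n + 1)) := by
  have hg : ∀ n : ℕ, 0 < Real.Gamma (α * n + 1) :=
    fun n => Real.Gamma_pos_of_pos (by positivity)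
  rw [← summable_abs_iff]
  have habs : ∀ n : ℕ, |z ^ n / Real.Gamma (α * n + 1)| = |z| ^ n / Real.Gamma (α * n + 1) := by
    intro n; rw [abs_div, abs_pow, abs_of_pos (hg n)]
  simp only [habs]
  obtain ⟨M, hM1, hMα⟩ : ∃ M : ℕ, 1 ≤ M ∧ 2 * (|z| + 1) ≤ (M : ℝ) ^ α := by
    obtain ⟨M, hM⟩ := exists_nat_ge ((2 * (|z| + 1)) ^ α⁻¹)
    refine ⟨M + 1, by omega, ?_⟩
    have hb : (0:ℝ) < 2 * (|z| + 1) := by positivity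
    have h1 : (2 * (|z| + 1)) ^ α⁻¹ ≤ ((M+1:ℕ):ℝ) := by push_cast; push_cast at hM; linarith
    calc 2 * (|z| + 1) = ((2 * (|z| + 1)) ^ α⁻¹) ^ α := (Real.rpow_inv_rpow hb.le hα.ne').symm
      _ ≤ ((M+1:ℕ):ℝ) ^ α := Real.rpow_le_rpow (by positivity) h1 hα.le
  have hM0 : (0:ℝ) < (M:ℝ) := by exact_mod_cast hM1
  have hMα0 : (0:ℝ) < (M:ℝ) ^ α := Real.rpow_pos_of_pos hM0 _
  set q := |z| / (M:ℝ) ^ α with hqdef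
  have hq0 : 0 ≤ q := by positivity
  have hq1 : q < 1 := by
    rw [hqdef, div_lt_one hMα0]; nlinarith [abs_nonneg z]
  set N := ⌈α⁻¹⌉₊ with hN
  have hαN : 1 ≤ α * N := by
    have : α⁻¹ ≤ (N:ℝ) := Nat.le_ceil _
    calc (1:ℝ) = α * α⁻¹ := by field_simp
      _ ≤ α * N := by nlinarith
  refine (summable_nat_add_iff N).1
    (Summable.of_nonneg_of_le (fun n => by positivity) (fun n => ?_)
      ((summable_geometric_of_lt_one hq0 hq1).mul_left (Real.exp M * M * q ^ N)))
  set m := n + N with hm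
  have hx1 : 1 ≤ α * ((m:ℕ):ℝ) := by
    calc (1:ℝ) ≤ α * N := hαN
      _ ≤ α * m := by
        have : (N:ℝ) ≤ (m:ℝ) := by exact_mod_cast Nat.le_add_left N n
        nlinarith
  have hgb := gamma_lb M hM1 (α * m) hx1
  have hlb0 : (0:ℝ) < (M:ℝ) ^ (α * m - 1) / Real.exp M := by positivity
  have hpow : ((M:ℝ) ^ α) ^ m = (M:ℝ) ^ (α * (m:ℝ)) := by
    rw [Real.rpow_mul hM0.le, Real.rpow_natCast]
  have hqm : q ^ m = |z| ^ m / (M:ℝ) ^ (α * (m:ℝ)) := by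
    rw [hqdef, div_pow, hpow]
  have key : |z| ^ m / Real.Gamma (α * m + 1) ≤ Real.exp M * M * q ^ m := by
    calc |z| ^ m / Real.Gamma (α * m + 1)
        ≤ |z| ^ m / ((M:ℝ) ^ (α * m - 1) / Real.exp M) := by
          exact div_le_div_of_nonneg_left (by positivity) hlb0 hgb
      _ = Real.exp M * M * q ^ m := by
          rw [hqm, Real.rpow_sub hM0, Real.rpow_one]
          have hne : ((M:ℝ) ^ (α * (m:ℝ))) ≠ 0 := by positivity
          field_simp
  calc |z| ^ (n + N) / Real.Gamma (α * ↑(n + N) + 1) ≤ Real.exp M * M * q ^ (n + N) := key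
    _ = Real.exp M * M * q ^ N * q ^ n := by rw [pow_add]; ring

noncomputable def mlRem (α x : ℝ) : ℝ := ∑' n : ℕ, x ^ (n + 2) / Real.Gamma (α * ((n : ℝ) + 2) + 1)

lemma rem_summable (α : ℝ) (hα : 0 < α) (x : ℝ) :
    Summable (fun n : ℕ => x ^ (n + 2) / Real.Gamma (α * ((n : ℝ) + 2) + 1)) := by
  have h := (summable_nat_add_iff 2).2 (ml_summable α hα x)
  refine h.congr fun n => ?_
  push_cast
  ring_nf

lemma ml_split (α : ℝ) (hα : 0 < α) (x : ℝ) :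
    mittagLeffler α x = 1 + x / Real.Gamma (α + 1) + mlRem α x := by
  have hs := ml_summable α hα x
  have hs1 : Summable (fun n : ℕ => x ^ (n + 1) / Real.Gamma (α * (n + 1 : ℕ) + 1)) :=
    (summable_nat_add_iff 1).2 hs
  rw [mittagLeffler, Summable.tsum_eq_zero_add hs, Summable.tsum_eq_zero_add hs1]
  have h0 : x ^ (0:ℕ) / Real.Gamma (α * (0:ℕ) + 1) = 1 := by
    simp [Real.Gamma_one]
  have h1 : x ^ (0+1) / Real.Gamma (α * ((0+1 : ℕ)) + 1) = x / Real.Gamma (α + 1) := by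
    norm_num
  rw [h0, h1, mlRem]
  have h2 : ∑' n : ℕ, x ^ (n + 1 + 1) / Real.Gamma (α * ((n + 1 + 1 : ℕ)) + 1)
      = ∑' n : ℕ, x ^ (n + 2) / Real.Gamma (α * ((n : ℝ) + 2) + 1) := by
    refine tsum_congr fun n => ?_
    push_cast
    ring_nf
  rw [h2]
  ring

lemma rem_bound (α : ℝ) (hα : 0 < α) (x : ℝ) (hx : |x| ≤ 1) :
    |mlRem α x| ≤ (∑' n : ℕ, 1 / Real.Gamma (α * ((n : ℝ) + 2) + 1)) * x ^ 2 := by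
  have hg : ∀ n : ℕ, 0 < Real.Gamma (α * ((n : ℝ) + 2) + 1) :=
    fun n => Real.Gamma_pos_of_pos (by positivity)
  have hsx := rem_summable α hα x
  have hs1 : Summable (fun n : ℕ => 1 / Real.Gamma (α * ((n : ℝ) + 2) + 1)) := by
    have := rem_summable α hα 1
    simpa using this
  have hsC : Summable (fun n : ℕ => 1 / Real.Gamma (α * ((n : ℝ) + 2) + 1) * x ^ 2) :=
    hs1.mul_right _
  have habs : Summable (fun n : ℕ => ‖x ^ (n + 2) / Real.Gamma (α * ((n : ℝ) + 2) + 1)‖) :=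
    hsx.abs
  calc |mlRem α x| ≤ ∑' n : ℕ, ‖x ^ (n + 2) / Real.Gamma (α * ((n : ℝ) + 2) + 1)‖ :=
        norm_tsum_le_tsum_norm habs
    _ ≤ ∑' n : ℕ, 1 / Real.Gamma (α * ((n : ℝ) + 2) + 1) * x ^ 2 := by
        refine Summable.tsum_le_tsum (fun n => ?_) habs hsC
        rw [Real.norm_eq_abs, abs_div, abs_pow, abs_of_pos (hg n)]
        have h1 : |x| ^ (n + 2) ≤ x ^ 2 := by
          calc |x| ^ (n + 2) = |x| ^ n * |x| ^ 2 := by ring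
            _ ≤ 1 * |x| ^ 2 :=
                mul_le_mul_of_nonneg_right (pow_le_one₀ (abs_nonneg x) hx) (by positivity)
            _ = x ^ 2 := by rw [one_mul, sq_abs]
        calc |x| ^ (n + 2) / Real.Gamma (α * ((n : ℝ) + 2) + 1)
            ≤ x ^ 2 / Real.Gamma (α * ((n : ℝ) + 2) + 1) := by gcongr
          _ = 1 / Real.Gamma (α * ((n : ℝ) + 2) + 1) * x ^ 2 := by ring
    _ = (∑' n : ℕ, 1 / Real.Gamma (α * ((n : ℝ) + 2) + 1)) * x ^ 2 := tsum_mul_right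

lemma ml_zero (α : ℝ) : mittagLeffler α 0 = 1 := by
  rw [mittagLeffler, tsum_eq_single 0 (fun n hn => by simp [zero_pow hn])]
  norm_num [Real.Gamma_one]

lemma alg_key (G C x y Rx Ry a : ℝ) (hG : 0 < G) (hC0 : 0 ≤ C) (ha1 : 0 < a) (ha2 : a < 2)
    (hy : y = a * x)
    (heq : 1 + y / G + Ry = (1 + x / G + Rx) * (1 + x / G + Rx))
    (hx1 : |x| ≤ 1) (hRx : |Rx| ≤ C * x ^ 2) (hRy : |Ry| ≤ C * y ^ 2) :
    (2 - a) / G * |x| ≤ (6 * C + (1 / G + C) ^ 2) * x ^ 2 := by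
  subst hy
  have hid : (a - 2) * (x / G) = 2 * Rx + (x / G + Rx) ^ 2 - Ry := by
    linear_combination heq
  have ha4 : a ^ 2 ≤ 4 := by nlinarith
  have hy2 : (a * x) ^ 2 ≤ 4 * x ^ 2 := by nlinarith [sq_nonneg x, mul_le_mul_of_nonneg_right ha4 (sq_nonneg x)]
  have hx2le : x ^ 2 ≤ |x| := by nlinarith [sq_abs x, abs_nonneg x]
  have hterm : |x / G + Rx| ≤ (1 / G + C) * |x| := by
    calc |x / G + Rx| ≤ |x / G| + |Rx| := abs_add_le _ _
      _ ≤ |x| / G + C * x ^ 2 := by rw [abs_div, abs_of_pos hG]; linarith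
      _ ≤ (1 / G + C) * |x| := by
          have h1 : C * x ^ 2 ≤ C * |x| := mul_le_mul_of_nonneg_left hx2le hC0
          have h2 : (1 / G + C) * |x| = |x| / G + C * |x| := by ring
          linarith [h2]
  have hsq : (x / G + Rx) ^ 2 ≤ (1 / G + C) ^ 2 * x ^ 2 := by
    nlinarith [hterm, abs_nonneg (x / G + Rx), sq_abs (x / G + Rx), sq_abs x]
  have hxabs : (2 - a) / G * |x| = |(a - 2) * (x / G)| := by
    rw [abs_mul, abs_div, abs_of_neg (by linarith : a - 2 < 0), abs_of_pos hG]
    ring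
  rw [hxabs, hid, abs_le]
  have hRx' := abs_le.mp hRx
  have hRy' := abs_le.mp hRy
  have hCy := mul_le_mul_of_nonneg_left hy2 hC0
  refine ⟨?_, ?_⟩
  · linarith [hRx'.1, hRy'.2, hCy, sq_nonneg (x / G + Rx),
      mul_nonneg (sq_nonneg (1 / G + C)) (sq_nonneg x)]
  · linarith [hRx'.2, hRy'.1, hsq, hCy]

theorem ml_semigroup_iff (α : ℝ) (hα : 0 < α) (hα1 : α < 1) (lam : ℝ)
    (f : ℝ → ℝ) (hf : ∀ t : ℝ, f t = mittagLeffler α (lam * t ^ α)) :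
    (∀ t s : ℝ, 0 ≤ t → 0 ≤ s → f (t + s) = f t * f s) ↔ lam = 0 := by
  constructor
  · intro H
    by_contra hlam
    have hl0 : 0 < |lam| := abs_pos.mpr hlam
    have hG : 0 < Real.Gamma (α + 1) := Real.Gamma_pos_of_pos (by linarith)
    have hC0 : 0 ≤ ∑' n : ℕ, 1 / Real.Gamma (α * ((n : ℝ) + 2) + 1) := tsum_nonneg fun n => by
      have : 0 < Real.Gamma (α * ((n : ℝ) + 2) + 1) := Real.Gamma_pos_of_pos (by positivity)
      positivity
    set G := Real.Gamma (α + 1)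
    set C := ∑' n : ℕ, 1 / Real.Gamma (α * ((n : ℝ) + 2) + 1)
    have h2α1 : (0:ℝ) < 2 ^ α := Real.rpow_pos_of_pos (by norm_num) _
    have h2α : (2:ℝ) ^ α < 2 := by
      have := Real.rpow_lt_rpow_of_exponent_lt (x := (2:ℝ)) (by norm_num) hα1
      rwa [Real.rpow_one] at this
    have hB : 0 < (2 - 2 ^ α) / G := div_pos (by linarith) hG
    have hK0 : 0 ≤ 6 * C + (1 / G + C) ^ 2 := by positivity
    obtain ⟨r, hr0, hr1, hr2⟩ :
        ∃ r : ℝ, 0 < r ∧ r * (2 * |lam|) ≤ 1 ∧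
          r * ((6 * C + (1 / G + C) ^ 2) * |lam| + 1) ≤ (2 - 2 ^ α) / G := by
      refine ⟨min (1 / (2 * |lam|)) (((2 - 2 ^ α) / G) / ((6 * C + (1 / G + C) ^ 2) * |lam| + 1)),
        lt_min (by positivity) (by positivity), ?_, ?_⟩
      · have h := min_le_left (1 / (2 * |lam|)) (((2 - 2 ^ α) / G) / ((6 * C + (1 / G + C) ^ 2) * |lam| + 1))
        rw [← le_div_iff₀ (by positivity : (0:ℝ) < 2 * |lam|)]
        exact h
      · have h := min_le_right (1 / (2 * |lam|)) (((2 - 2 ^ α) / G) / ((6 * C + (1 / G + C) ^ 2) * |lam| + 1))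
        rw [← le_div_iff₀ (by positivity : (0:ℝ) < (6 * C + (1 / G + C) ^ 2) * |lam| + 1)]
        exact h
    have hxhalf : |lam * r| ≤ 1 / 2 := by
      rw [abs_mul, abs_of_pos hr0]
      nlinarith [abs_nonneg lam]
    set t := r ^ α⁻¹ with htdef
    have ht0 : 0 ≤ t := Real.rpow_nonneg hr0.le _
    have htα : t ^ α = r := Real.rpow_inv_rpow hr0.le hα.ne'
    have h2t : (t + t) ^ α = 2 ^ α * r := by
      rw [show t + t = 2 * t by ring, Real.mul_rpow (by norm_num) ht0, htα]
    have heq := H t t ht0 ht0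
    rw [hf (t + t), hf t, h2t, htα,
      show lam * (2 ^ α * r) = 2 ^ α * (lam * r) by ring] at heq
    rw [ml_split α hα (2 ^ α * (lam * r)), ml_split α hα (lam * r)] at heq
    have hy1 : |2 ^ α * (lam * r)| ≤ 1 := by
      rw [abs_mul, abs_of_pos h2α1]
      nlinarith [abs_nonneg (lam * r)]
    have hkey := alg_key G C (lam * r) (2 ^ α * (lam * r)) (mlRem α (lam * r))
      (mlRem α (2 ^ α * (lam * r))) (2 ^ α) hG hC0 h2α1 h2α rfl heq
      (by linarith) (rem_bound α hα (lam * r) (by linarith))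
      (rem_bound α hα (2 ^ α * (lam * r)) hy1)
    rw [abs_mul, abs_of_pos hr0, mul_pow] at hkey
    -- hkey : (2 - 2^α)/G * (|lam| * r) ≤ K * (lam^2 * r^2)
    set B := (2 - 2 ^ α) / G with hBd
    set K := 6 * C + (1 / G + C) ^ 2 with hKd
    clear_value B K
    have hll : lam ^ 2 = |lam| ^ 2 := (sq_abs lam).symm
    rw [hll] at hkey
    have h1 := mul_le_mul_of_nonneg_left hr2 (mul_nonneg (abs_nonneg lam) hr0.le)
    nlinarith [hkey, h1, mul_pos (mul_pos hl0 hr0) hr0]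
  · intro h
    subst h
    intro t s ht hs
    rw [hf, hf, hf]
    simp [ml_zero]
end

section
/- Let α ∈ (0,1) and λ ≠ 0. Then there exist t, s ≥ 0 such that E_α(λ·(t+s)^α) ≠ E_α(λ·t^α)·E_α(λ·s^α). -/
set_option maxHeartbeats 1000000

open Real

lemma gamma_arg_pos (α : ℝ) (hα : 0 < α) (n : ℕ) : 0 < Real.Gamma (α * n + 1) :=
  Real.Gamma_pos_of_pos (by positivity)

lemma ml_summable_abs (α : ℝ) (hα : 0 < α) (z : ℝ) :
    Summable (fun n : ℕ => |z| ^ n / Real.Gamma (α * n + 1)) := by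
  set C : ℝ := (2 * (|z| + 1)) ^ (1 / α) with hCdef
  have hbase : (1:ℝ) < 2 * (|z| + 1) := by nlinarith [abs_nonneg z]
  have hC1 : 1 < C := Real.one_lt_rpow_iff_of_pos (by linarith) |>.2 (Or.inl ⟨hbase, by positivity⟩)
  have hC0 : 0 < C := lt_trans one_pos hC1
  have hCα : C ^ α = 2 * (|z| + 1) := by
    rw [hCdef, one_div, Real.rpow_inv_rpow (by linarith) (ne_of_gt hα)]
  -- eventually C ^ m ≤ m!
  have htend := FloorSemiring.tendsto_pow_div_factorial_atTop (K := ℝ) C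
  have hev : ∀ᶠ m : ℕ in Filter.atTop, C ^ m / m.factorial ≤ 1 :=
    htend.eventually_le_const (by norm_num : (0:ℝ) < 1)
  obtain ⟨N₁, hN₁⟩ := hev.exists_forall_of_atTop
  -- choose N so that for n ≥ N, α * n ≥ N₁ + 1
  obtain ⟨N, hN⟩ := Archimedean.arch ((N₁:ℝ) + 1) hα
  have key : ∀ n : ℕ, n ≥ N → |z| ^ n / Real.Gamma (α * n + 1) ≤ C * (1/2) ^ n := by
    intro n hn
    have hαn : (N₁:ℝ) + 1 ≤ α * n := by
      calc (N₁:ℝ) + 1 ≤ N • α := hN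
        _ = (N:ℝ) * α := by simp [nsmul_eq_mul]
        _ ≤ α * n := by rw [mul_comm]; exact mul_le_mul_of_nonneg_left (by exact_mod_cast hn) hα.le
    set m : ℕ := ⌊α * n⌋₊ with hm
    have hmN₁ : N₁ + 1 ≤ m := Nat.le_floor (by exact_mod_cast hαn)
    have hm1 : 1 ≤ m := le_trans (Nat.le_add_left 1 N₁) hmN₁
    have hfloor_le : (m:ℝ) ≤ α * n := Nat.floor_le (by positivity)
    have hle_floor : α * n - 1 ≤ (m:ℝ) := by
      have := Nat.lt_floor_add_one (α * n)
      linarith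
    -- Gamma (α n + 1) ≥ m!
    have hmono := Real.Gamma_strictMonoOn_Ici.monotoneOn
    have h1 : ((m:ℝ) + 1) ∈ Set.Ici (2:ℝ) := by
      simp only [Set.mem_Ici]; have : (1:ℝ) ≤ (m:ℝ) := by exact_mod_cast hm1
      linarith
    have h2 : (α * n + 1) ∈ Set.Ici (2:ℝ) := by
      simp only [Set.mem_Ici]; linarith
    have hgam : (m.factorial : ℝ) ≤ Real.Gamma (α * n + 1) := by
      rw [← Real.Gamma_nat_eq_factorial]
      exact hmono h1 h2 (by linarith)
    -- C ^ m ≤ m!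
    have hCm : C ^ m ≤ (m.factorial : ℝ) := by
      have := hN₁ m (le_trans (Nat.le_add_right N₁ 1) hmN₁)
      have hf : (0:ℝ) < m.factorial := by exact_mod_cast m.factorial_pos
      calc C ^ m = (C ^ m / m.factorial) * m.factorial := by field_simp
        _ ≤ 1 * m.factorial := by apply mul_le_mul_of_nonneg_right this hf.le
        _ = m.factorial := one_mul _
    -- C ^ m ≥ (2(|z|+1))^n / C
    have hCm2 : (2 * (|z| + 1)) ^ n / C ≤ C ^ m := by
      have h1 : C ^ (α * n - 1) ≤ C ^ (m:ℝ) := Real.rpow_le_rpow_left_iff hC1 |>.2 hle_floor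
      have h2 : C ^ ((m:ℝ)) = C ^ m := Real.rpow_natCast C m
      have h3 : C ^ (α * n - 1) = (2 * (|z| + 1)) ^ n / C := by
        rw [Real.rpow_sub hC0, Real.rpow_one, Real.rpow_mul hC0.le, hCα, Real.rpow_natCast]
      rw [← h3, ← h2]; exact h1
    have hgam2 : (2 * (|z| + 1)) ^ n / C ≤ Real.Gamma (α * n + 1) :=
      le_trans hCm2 (le_trans hCm hgam)
    have hgampos := gamma_arg_pos α hα n
    have hpowpos : (0:ℝ) < (2 * (|z| + 1)) ^ n := by positivity
    calc |z| ^ n / Real.Gamma (α * n + 1) ≤ |z| ^ n / ((2 * (|z| + 1)) ^ n / C) := by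
          apply div_le_div_of_nonneg_left (by positivity) (by positivity) hgam2
      _ = C * (|z| / (2 * (|z| + 1))) ^ n := by
          rw [div_pow]; field_simp
      _ ≤ C * (1/2) ^ n := by
          apply mul_le_mul_of_nonneg_left _ hC0.le
          apply pow_le_pow_left₀ (by positivity)
          rw [div_le_div_iff₀ (by positivity) (by norm_num)]
          nlinarith [abs_nonneg z]
  have hsum : Summable (fun n : ℕ => C * (1/2) ^ n) :=
    (summable_geometric_of_lt_one (by norm_num) (by norm_num)).mul_left C
  rw [← summable_nat_add_iff N]
  apply Summable.of_nonneg_of_le (fun n => by positivity)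
    (fun n => key (n + N) (Nat.le_add_left N n))
  exact (summable_nat_add_iff N).2 hsum

lemma ml_tail (α : ℝ) (hα : 0 < α) (z : ℝ) (hz : |z| ≤ 1) :
    |mittagLeffler α z - 1 - z / Real.Gamma (α + 1)|
      ≤ (∑' n : ℕ, 1 / Real.Gamma (α * ((n : ℝ) + 2) + 1)) * z ^ 2 := by
  set f : ℕ → ℝ := fun n => z ^ n / Real.Gamma (α * n + 1) with hfdef
  have hf := ml_summable α hα z
  have hfabs : Summable (fun n : ℕ => |f n|) := by
    have : ∀ n : ℕ, |f n| = |z| ^ n / Real.Gamma (α * n + 1) := fun n => by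
      rw [hfdef]; rw [abs_div, abs_pow, abs_of_pos (gamma_arg_pos α hα n)]
    simpa [this] using ml_summable_abs α hα z
  have hg : Summable (fun n : ℕ => 1 / Real.Gamma (α * ((n : ℝ) + 2) + 1)) := by
    have h1 : Summable (fun n : ℕ => (1:ℝ) ^ n / Real.Gamma (α * n + 1)) := ml_summable α hα 1
    have h2 := (summable_nat_add_iff 2).2 h1
    have h3 : ∀ n : ℕ, (1:ℝ) ^ (n + 2) / Real.Gamma (α * ((n : ℕ) + 2 : ℕ) + 1)
        = 1 / Real.Gamma (α * ((n : ℝ) + 2) + 1) := by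
      intro n; push_cast; norm_num
    simpa [h3] using h2
  have hsplit := Summable.sum_add_tsum_nat_add 2 hf
  have hsum2 : ∑ i ∈ Finset.range 2, f i = 1 + z / Real.Gamma (α + 1) := by
    rw [Finset.sum_range_succ, Finset.sum_range_one, hfdef]
    simp [Real.Gamma_one]
  have hrest : mittagLeffler α z - 1 - z / Real.Gamma (α + 1) = ∑' i, f (i + 2) := by
    have h0 : mittagLeffler α z = ∑' n, f n := rfl
    rw [h0, ← hsplit, hsum2]; ring
  rw [hrest]
  have habs2 : Summable (fun i : ℕ => |f (i + 2)|) := (summable_nat_add_iff 2).2 hfabs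
  have hbound : ∀ i : ℕ, |f (i + 2)| ≤ z ^ 2 * (1 / Real.Gamma (α * ((i : ℝ) + 2) + 1)) := by
    intro i
    have hΓ := gamma_arg_pos α hα (i + 2)
    have h1 : |f (i + 2)| = |z| ^ (i + 2) / Real.Gamma (α * ((i : ℕ) + 2 : ℕ) + 1) := by
      rw [hfdef]; rw [abs_div, abs_pow, abs_of_pos hΓ]
    rw [h1]
    have h2 : |z| ^ (i + 2) ≤ z ^ 2 := by
      have h3 : |z| ^ i ≤ 1 := pow_le_one₀ (abs_nonneg z) hz
      calc |z| ^ (i + 2) = |z| ^ i * |z| ^ 2 := by ring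
        _ ≤ 1 * |z| ^ 2 := mul_le_mul_of_nonneg_right h3 (by positivity)
        _ = z ^ 2 := by rw [one_mul, sq_abs]
    have hcast : ((i + 2 : ℕ) : ℝ) = (i : ℝ) + 2 := by push_cast; ring
    rw [hcast, div_eq_mul_one_div]
    apply mul_le_mul_of_nonneg_right h2
    positivity
  calc |∑' i, f (i + 2)| ≤ ∑' i : ℕ, |f (i + 2)| := by
        have h := norm_tsum_le_tsum_norm (f := fun i : ℕ => f (i + 2)) (by simpa using habs2)
        simpa using h
    _ ≤ ∑' i : ℕ, z ^ 2 * (1 / Real.Gamma (α * ((i : ℝ) + 2) + 1)) :=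
        Summable.tsum_le_tsum hbound habs2 (hg.mul_left _)
    _ = (∑' n : ℕ, 1 / Real.Gamma (α * ((n : ℝ) + 2) + 1)) * z ^ 2 := by
        rw [tsum_mul_left, mul_comm]

theorem ml_semigroup_fails (α : ℝ) (hα : 0 < α) (hα1 : α < 1) (lam : ℝ) (hlam : lam ≠ 0) :
    ∃ t s : ℝ, 0 ≤ t ∧ 0 ≤ s ∧
      mittagLeffler α (lam * (t + s) ^ α)
        ≠ mittagLeffler α (lam * t ^ α) * mittagLeffler α (lam * s ^ α) := by
  by_contra hcon
  push_neg at hcon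
  set p : ℝ := (2:ℝ) ^ α with hpdef
  have hp1 : 1 ≤ p := by
    rw [hpdef, ← Real.rpow_zero 2]
    exact Real.rpow_le_rpow_left_iff (by norm_num) |>.2 hα.le
  have hp2 : p < 2 := by
    calc p = (2:ℝ) ^ α := hpdef
      _ < (2:ℝ) ^ (1:ℝ) := (Real.rpow_lt_rpow_left_iff (by norm_num)).2 hα1
      _ = 2 := Real.rpow_one 2
  have hp0 : 0 < p := lt_of_lt_of_le one_pos hp1
  -- key: semigroup identity in multiplicative form
  have key : ∀ u : ℝ, 0 ≤ u →
      mittagLeffler α (lam * (p * u)) = (mittagLeffler α (lam * u)) ^ 2 := by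
    intro u hu
    have ht : (0:ℝ) ≤ u ^ (α⁻¹ : ℝ) := Real.rpow_nonneg hu _
    have h1 := hcon (u ^ (α⁻¹:ℝ)) (u ^ (α⁻¹:ℝ)) ht ht
    have h2 : (u ^ (α⁻¹:ℝ)) ^ α = u := Real.rpow_inv_rpow hu (ne_of_gt hα)
    have h3 : (u ^ (α⁻¹:ℝ) + u ^ (α⁻¹:ℝ)) ^ α = p * u := by
      rw [← two_mul, Real.mul_rpow (by norm_num) ht, h2, hpdef]
    rw [h3, h2] at h1
    rw [h1]; ring
  set G : ℝ := Real.Gamma (α + 1) with hGdef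
  have hG : 0 < G := Real.Gamma_pos_of_pos (by linarith)
  set a : ℝ := lam / G with hadef
  have ha : a ≠ 0 := div_ne_zero hlam (ne_of_gt hG)
  have ha' : 0 < |a| := abs_pos.2 ha
  set M : ℝ := ∑' n : ℕ, 1 / Real.Gamma (α * ((n : ℝ) + 2) + 1) with hMdef
  have hM : 0 ≤ M := tsum_nonneg (fun n => by
    have : 0 < Real.Gamma (α * ((n : ℝ) + 2) + 1) := Real.Gamma_pos_of_pos (by positivity)
    positivity)
  set B : ℝ := M * lam ^ 2 with hBdef
  have hB : 0 ≤ B := by positivity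
  set K : ℝ := B * p ^ 2 + a ^ 2 + 2 * B + 2 * |a| * B + B ^ 2 with hKdef
  have hK : 0 < K := by
    have : 0 < a ^ 2 := by positivity
    nlinarith [sq_nonneg p, hB, mul_nonneg (mul_nonneg (by norm_num : (0:ℝ) ≤ 2) (abs_nonneg a)) hB, sq_nonneg B, mul_nonneg hB (sq_nonneg p)]
  set c : ℝ := 2 - p with hcdef
  have hc : 0 < c := by rw [hcdef]; linarith
  set u : ℝ := min 1 (min ((|lam| * p)⁻¹) (c * |a| / (2 * K))) with hudef
  have hlam' : 0 < |lam| := abs_pos.2 hlam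
  have hu : 0 < u := by
    apply lt_min one_pos
    apply lt_min
    · positivity
    · positivity
  have hu1 : u ≤ 1 := min_le_left _ _
  have hu2 : u ≤ (|lam| * p)⁻¹ := le_trans (min_le_right _ _) (min_le_left _ _)
  have hu3 : u ≤ c * |a| / (2 * K) := le_trans (min_le_right _ _) (min_le_right _ _)
  -- bounds on remainders
  have hz2 : |lam * u| ≤ 1 := by
    rw [abs_mul, abs_of_pos hu]
    calc |lam| * u ≤ |lam| * (|lam| * p)⁻¹ := mul_le_mul_of_nonneg_left hu2 (abs_nonneg lam)
      _ = p⁻¹ := by field_simp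
      _ ≤ 1 := by rw [inv_le_one_iff₀]; right; exact hp1
  have hz1 : |lam * (p * u)| ≤ 1 := by
    rw [abs_mul, abs_of_pos (by positivity : (0:ℝ) < p * u)]
    calc |lam| * (p * u) = (|lam| * p) * u := by ring
      _ ≤ (|lam| * p) * (|lam| * p)⁻¹ := mul_le_mul_of_nonneg_left hu2 (by positivity)
      _ = 1 := by field_simp
  have hR1 := ml_tail α hα (lam * (p * u)) hz1
  have hR2 := ml_tail α hα (lam * u) hz2
  rw [← hMdef, ← hGdef] at hR1 hR2
  set R1 : ℝ := mittagLeffler α (lam * (p * u)) - 1 - lam * (p * u) / G with hR1def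
  set R2 : ℝ := mittagLeffler α (lam * u) - 1 - lam * u / G with hR2def
  have hR1b : |R1| ≤ B * p ^ 2 * u ^ 2 := by
    calc |R1| ≤ M * (lam * (p * u)) ^ 2 := hR1
      _ = B * p ^ 2 * u ^ 2 := by rw [hBdef]; ring
  have hR2b : |R2| ≤ B * u ^ 2 := by
    calc |R2| ≤ M * (lam * u) ^ 2 := hR2
      _ = B * u ^ 2 := by rw [hBdef]; ring
  -- the identity
  have hkey := key u hu.le
  have heq : c * a * u = R1 - a ^ 2 * u ^ 2 - 2 * R2 - 2 * a * u * R2 - R2 ^ 2 := by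
    have e1 : mittagLeffler α (lam * (p * u)) = 1 + p * a * u + R1 := by
      rw [hR1def, hadef]; field_simp; ring
    have e2 : mittagLeffler α (lam * u) = 1 + a * u + R2 := by
      rw [hR2def, hadef]; field_simp; ring
    rw [e1, e2] at hkey
    rw [hcdef]
    nlinarith [hkey]
  -- bound |c a u|
  have habs : c * |a| * u ≤ |R1| + a ^ 2 * u ^ 2 + 2 * |R2| + 2 * |a| * u * |R2| + |R2| ^ 2 := by
    have h0 : c * |a| * u = |c * a * u| := by
      rw [abs_mul, abs_mul, abs_of_pos hc, abs_of_pos hu]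
    rw [h0, heq]
    have t1 : |R1 - a ^ 2 * u ^ 2 - 2 * R2 - 2 * a * u * R2 - R2 ^ 2|
        ≤ |R1| + |a ^ 2 * u ^ 2| + |2 * R2| + |2 * a * u * R2| + |R2 ^ 2| := by
      have := abs_sub (R1 - a ^ 2 * u ^ 2 - 2 * R2 - 2 * a * u * R2) (R2 ^ 2)
      have h2 := abs_sub (R1 - a ^ 2 * u ^ 2 - 2 * R2) (2 * a * u * R2)
      have h3 := abs_sub (R1 - a ^ 2 * u ^ 2) (2 * R2)
      have h4 := abs_sub R1 (a ^ 2 * u ^ 2)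
      linarith
    have e1 : |a ^ 2 * u ^ 2| = a ^ 2 * u ^ 2 := abs_of_nonneg (by positivity)
    have e2 : |2 * R2| = 2 * |R2| := by rw [abs_mul]; norm_num
    have e3 : |2 * a * u * R2| = 2 * |a| * u * |R2| := by
      simp [abs_mul, abs_of_pos hu]
      try ring
    have e4 : |R2 ^ 2| = |R2| ^ 2 := abs_pow R2 2
    linarith [t1]
  have hfin : c * |a| * u ≤ K * u ^ 2 := by
    have hx3 : u ^ 3 ≤ u ^ 2 := pow_le_pow_of_le_one hu.le hu1 (by norm_num)
    have hx4 : u ^ 4 ≤ u ^ 2 := pow_le_pow_of_le_one hu.le hu1 (by norm_num)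
    calc c * |a| * u ≤ |R1| + a ^ 2 * u ^ 2 + 2 * |R2| + 2 * |a| * u * |R2| + |R2| ^ 2 := habs
      _ ≤ B * p ^ 2 * u ^ 2 + a ^ 2 * u ^ 2 + 2 * (B * u ^ 2) + 2 * |a| * u * (B * u ^ 2) + (B * u ^ 2) ^ 2 := by
        gcongr <;> first | positivity | exact abs_nonneg R2
      _ = B * p ^ 2 * u ^ 2 + a ^ 2 * u ^ 2 + 2 * B * u ^ 2 + 2 * |a| * B * u ^ 3 + B ^ 2 * u ^ 4 := by ring
      _ ≤ B * p ^ 2 * u ^ 2 + a ^ 2 * u ^ 2 + 2 * B * u ^ 2 + 2 * |a| * B * u ^ 2 + B ^ 2 * u ^ 2 := by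
        gcongr <;> try positivity
      _ = K * u ^ 2 := by rw [hKdef]; ring
  -- contradiction
  have hKu : K * u ≤ c * |a| / 2 := by
    calc K * u ≤ K * (c * |a| / (2 * K)) := mul_le_mul_of_nonneg_left hu3 hK.le
      _ = c * |a| / 2 := by field_simp
  have h1 : K * u ^ 2 ≤ c * |a| / 2 * u := by
    calc K * u ^ 2 = K * u * u := by ring
      _ ≤ c * |a| / 2 * u := mul_le_mul_of_nonneg_right hKu hu.le
  have h2 : c * |a| / 2 * u = c * |a| * u / 2 := by ring
  have h3 : 0 < c * |a| * u := mul_pos (mul_pos hc ha') hu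
  have h4 : c * |a| * u ≤ c * |a| * u / 2 := le_trans hfin (h1.trans_eq h2)
  clear_value u K c a p G M B R1 R2
  linarith
end

section
/- Let α ∈ (0,1) and λ > 0. Then the function t ↦ E_α(λ·t^α) is strictly increasing on [0,∞). -/
/-!
Each coefficient `1 / Γ(αn + 1)` is positive, so for `0 ≤ x < y` the series for `E_α(y)` dominates
that for `E_α(x)` termwise, strictly at `n = 1`. Convergence for every `α > 0` follows from the ratio
test: log-convexity of `Γ` gives `Γ(x + α) ≥ (x - 1)^α Γ(x)`, so consecutive coefficients decay by
a factor at most `(αn)^(-α) → 0`.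
-/

open Real Filter Set

namespace Real

/-- The secant slope of `log ∘ Γ` over `[x, x + a]` is at least that over `[x - 1, x]`,
which is `log (x - 1)`. -/
theorem rpow_sub_one_mul_Gamma_le_Gamma_add {a x : ℝ} (ha : 0 < a) (hx : 1 < x) :
    (x - 1) ^ a * Gamma x ≤ Gamma (x + a) := by
  have hx₁ : 0 < x - 1 := by linarith
  have hΓx : 0 < Gamma x := Gamma_pos_of_pos (by linarith)
  have hxa : 0 < x + a := by linarith
  have hslope := convexOn_log_Gamma.slope_mono_adjacent (x := x - 1) (y := x) (z := x + a)
    hx₁ hxa (by linarith) (by linarith)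
  have hGamma_sub_one : Gamma x = (x - 1) * Gamma (x - 1) := by
    simpa using Gamma_add_one hx₁.ne'
  simp only [Function.comp_apply, sub_sub_cancel, div_one, add_sub_cancel_left] at hslope
  have hlogGamma : log (Gamma x) = log (x - 1) + log (Gamma (x - 1)) := by
    rw [hGamma_sub_one, log_mul hx₁.ne' (Gamma_pos_of_pos hx₁).ne']
  rw [hlogGamma, add_sub_cancel_right, le_div_iff₀ ha] at hslope
  rw [← log_le_log_iff (by positivity) (Gamma_pos_of_pos hxa),
    log_mul (by positivity) hΓx.ne', log_rpow hx₁, hlogGamma]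
  linarith

end Real

theorem eventually_mul_Gamma_le_Gamma_mul_succ {α : ℝ} (hα : 0 < α) (c : ℝ) :
    ∀ᶠ n : ℕ in atTop, c * Gamma (α * n + 1) ≤ Gamma (α * (n + 1) + 1) := by
  have hgrowth : Tendsto (fun n : ℕ => (α * n) ^ α) atTop atTop :=
    (tendsto_rpow_atTop hα).comp (tendsto_natCast_atTop_atTop.const_mul_atTop hα)
  filter_upwards [hgrowth.eventually_ge_atTop c, eventually_ge_atTop 1] with n hc hn
  have hαn : 0 < α * n := mul_pos hα (by exact_mod_cast hn)
  calc c * Gamma (α * n + 1)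
      ≤ (α * n) ^ α * Gamma (α * n + 1) :=
        mul_le_mul_of_nonneg_right hc (by positivity)
    _ ≤ Gamma (α * n + 1 + α) := by
        simpa using rpow_sub_one_mul_Gamma_le_Gamma_add hα (by linarith : 1 < α * n + 1)
    _ = Gamma (α * (n + 1) + 1) := by ring_nf

theorem summable_mittagLeffler {α : ℝ} (hα : 0 < α) (z : ℝ) :
    Summable fun n : ℕ => z ^ n / Gamma (α * n + 1) := by
  refine summable_of_ratio_norm_eventually_le (r := 1 / 2) (by norm_num) ?_
  filter_upwards [eventually_mul_Gamma_le_Gamma_mul_succ hα (2 * |z|)] with n hn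
  have hΓ : 0 < Gamma (α * n + 1) := by positivity
  have hΓ' : 0 < Gamma (α * (n + 1) + 1) := by positivity
  push_cast
  rw [norm_div, norm_div, norm_pow, norm_pow, Real.norm_of_nonneg hΓ.le,
    Real.norm_of_nonneg hΓ'.le, Real.norm_eq_abs, div_le_iff₀ hΓ']
  calc |z| ^ (n + 1) = 1 / 2 * (|z| ^ n / Gamma (α * n + 1)) * (2 * |z| * Gamma (α * n + 1)) := by
        field_simp
        ring
    _ ≤ 1 / 2 * (|z| ^ n / Gamma (α * n + 1)) * Gamma (α * (n + 1) + 1) := by gcongr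

theorem mittagLeffler_strictMonoOn {α : ℝ} (hα : 0 < α) : StrictMonoOn (mittagLeffler α) (Ici 0) := by
  intro x (hx : 0 ≤ x) y _ hxy
  refine Summable.tsum_lt_tsum_of_nonneg (i := 1) (fun n => by positivity) (fun n => by gcongr) ?_
    (summable_mittagLeffler hα y)
  simpa only [pow_one] using div_lt_div_of_pos_right hxy (by positivity)

theorem ml_strictMono_general (α : ℝ) (hα : 0 < α) (lam : ℝ) (hlam : 0 < lam) :
    StrictMonoOn (fun t : ℝ => mittagLeffler α (lam * t ^ α)) (Set.Ici 0) := by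
  have hscaled : StrictMonoOn (fun t : ℝ => lam * t ^ α) (Ici 0) := fun s hs t ht hst =>
    mul_lt_mul_of_pos_left (strictMonoOn_rpow_Ici_of_exponent_pos hα hs ht hst) hlam
  refine (mittagLeffler_strictMonoOn hα).comp hscaled fun t (ht : 0 ≤ t) => ?_
  exact mul_nonneg hlam.le (rpow_nonneg ht α)

theorem ml_strictMono (α : ℝ) (hα : 0 < α) (hα1 : α < 1) (lam : ℝ) (hlam : 0 < lam) :
    StrictMonoOn (fun t : ℝ => mittagLeffler α (lam * t ^ α)) (Set.Ici 0) :=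
  ml_strictMono_general α hα lam hlam
end
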